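/- Let F be a field of characteristic ≠ 2,3 and let A be the 2-dimensional algebra with basis e_1, e_2 and structure constants given by matrix A_5(α₁): e_1e_1 = α₁e_1 + e_2, e_1e_2 = (2α₁−1)e_2, e_2e_1 = (1−α₁)e_2, e_2e_2 = 0. If 3α₁ − 1 ≠ 0, then the opposite algebra A^{op} is isomorphic to the algebra A_5(α₁/(3α₁−1)). -/

import Mathlib

/-!
Rescaling the basis to `e₁' = c e₁`, `e₂' = c² e₂` with `c = 3α - 1` turns the opposite
product of `A₅(α)` into that of `A₅(α / c)`: with `β = α / c` one has `βc = α`,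
`(2β - 1)c = 1 - α` and `(1 - β)c = 2α - 1`, so the two off-diagonal constants swap as they
must under passage to the opposite algebra.
-/

/-- The algebra `A₅(α)`: `e₁e₁ = αe₁ + e₂`, `e₁e₂ = (2α-1)e₂`,
`e₂e₁ = (1-α)e₂`, `e₂e₂ = 0`, on `F × F` with `e₁ = (1,0)`, `e₂ = (0,1)`. -/
def mulA5 {F : Type*} [Field F] (a : F) (u v : F × F) : F × F :=
  (a * (u.1 * v.1),
   u.1 * v.1 + (2 * a - 1) * (u.1 * v.2) + (1 - a) * (u.2 * v.1))

section

variable {F : Type*} [Field F]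

def diagScale (c : F) (hc : c ≠ 0) : (F × F) ≃ₗ[F] (F × F) :=
  (LinearEquiv.smulOfNeZero F F c hc).prodCongr
    (LinearEquiv.smulOfNeZero F F (c ^ 2) (pow_ne_zero 2 hc))

@[simp]
theorem diagScale_apply (c : F) (hc : c ≠ 0) (p : F × F) :
    diagScale c hc p = (c * p.1, c ^ 2 * p.2) :=
  rfl

theorem diagScale_mulA5_swap {a b c : F} (hc : c ≠ 0) (hc_def : c = 3 * a - 1)
    (hb : b * c = a) (u v : F × F) :
    diagScale c hc (mulA5 a v u) = mulA5 b (diagScale c hc u) (diagScale c hc v) := by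
  have h₁ : (2 * b - 1) * c = 1 - a := by linear_combination 2 * hb - hc_def
  have h₂ : (1 - b) * c = 2 * a - 1 := by linear_combination hc_def - hb
  simp only [diagScale_apply, mulA5, Prod.ext_iff]
  constructor
  · linear_combination -c * u.1 * v.1 * hb
  · linear_combination -c ^ 2 * u.1 * v.2 * h₁ - c ^ 2 * u.2 * v.1 * h₂

end

theorem A5_op_iso_general
    {F : Type*} [Field F]
    (a : F) (ha : 3 * a - 1 ≠ 0) :
    ∃ g : (F × F) ≃ₗ[F] (F × F),
      ∀ u v : F × F, g (mulA5 a v u) = mulA5 (a / (3 * a - 1)) (g u) (g v) :=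
  ⟨diagScale _ ha, diagScale_mulA5_swap ha rfl (div_mul_cancel₀ a ha)⟩

/-- If `char F ≠ 2,3` and `3α - 1 ≠ 0` then `(A₅(α))ᵒᵖ ≅ A₅(α/(3α-1))`. -/
theorem A5_op_iso
    {F : Type*} [Field F] (h2 : (2 : F) ≠ 0) (h3 : (3 : F) ≠ 0)
    (a : F) (ha : 3 * a - 1 ≠ 0) :
    ∃ g : (F × F) ≃ₗ[F] (F × F),
      ∀ u v : F × F, g (mulA5 a v u) = mulA5 (a / (3 * a - 1)) (g u) (g v) :=
  A5_op_iso_general a ha
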